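/- For n ≥ 1 let ν_n = 2^{−n} Σ_{j=1}^{2^n} δ_{j/2^n} and let ν = Σ_{n≥1} a_n ν_n with a_n > 0 and Σ_n a_n 2^n = ∞. Then for every λ ∈ [0,1], G(λ) := ∫_ℝ (λ−λ')^{−2} dν(λ') = ∞. Consequently ν-almost every point fails the finiteness condition G(λ) < ∞, i.e., the set {λ ∈ [0,1] : G(λ) < ∞} is empty. -/

import Mathlib

/-!
At every level `n` some dyadic point `j / 2ⁿ` lies within `2⁻ⁿ` of `λ`, so the `n`-th piece
`a_n ν_n` contributes at least `a_n 2⁻ⁿ · 4ⁿ = a_n 2ⁿ` to `∫ (λ - t)⁻² dν(t)`; summing over `n`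
gives `Σ a_n 2ⁿ = ∞`.
-/

open MeasureTheory
open scoped ENNReal NNReal

/-- The measure `ν = Σ_{n ≥ 1} a_n ν_n`, where `ν_n = 2⁻ⁿ Σ_{j=1}^{2ⁿ} δ_{j/2ⁿ}` is the
uniform probability measure on the dyadic rationals of order `n` in `(0,1]`. -/
noncomputable def dyadicMeasure (a : ℕ → ℝ) : Measure ℝ :=
  Measure.sum fun n : ℕ =>
    ENNReal.ofReal (a (n + 1)) •
      ((2 ^ (n + 1) : ℝ≥0∞)⁻¹ •
        ∑ j ∈ Finset.Icc (1 : ℕ) (2 ^ (n + 1)), Measure.dirac ((j : ℝ) / 2 ^ (n + 1)))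

lemma lintegral_dyadicMeasure (a : ℕ → ℝ) (f : ℝ → ℝ≥0∞) :
    ∫⁻ t, f t ∂dyadicMeasure a = ∑' n : ℕ, ENNReal.ofReal (a (n + 1)) *
      ((2 ^ (n + 1) : ℝ≥0∞)⁻¹ * ∑ j ∈ Finset.Icc (1 : ℕ) (2 ^ (n + 1)), f (j / 2 ^ (n + 1))) := by
  simp only [dyadicMeasure, lintegral_sum_measure, lintegral_smul_measure,
    lintegral_finsetSum_measure, lintegral_dirac, smul_eq_mul]

lemma exists_mem_Icc_abs_sub_div_le {x : ℝ} (hx : x ∈ Set.Icc (0 : ℝ) 1) {N : ℕ} (hN : 0 < N) :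
    ∃ j ∈ Finset.Icc 1 N, |x - j / N| ≤ 1 / N := by
  have hN' : (0 : ℝ) < N := Nat.cast_pos.mpr hN
  have hxN : 0 ≤ x * N := mul_nonneg hx.1 hN'.le
  refine ⟨max 1 ⌈x * N⌉₊, Finset.mem_Icc.mpr ⟨le_max_left _ _, max_le hN ?_⟩, ?_⟩
  · exact Nat.ceil_le.mpr (by nlinarith [hx.2])
  · have hceil_le : x * N ≤ ⌈x * N⌉₊ := Nat.le_ceil _
    have hceil_lt : (⌈x * N⌉₊ : ℝ) < x * N + 1 := Nat.ceil_lt_add_one hxN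
    rw [show x - (max 1 ⌈x * N⌉₊ : ℕ) / N = (x * N - (max 1 ⌈x * N⌉₊ : ℕ)) / N by field_simp,
      abs_div, abs_of_pos hN', div_le_div_iff_of_pos_right hN', abs_le, Nat.cast_max, Nat.cast_one]
    constructor <;> cases max_cases (1 : ℝ) ⌈x * N⌉₊ <;> linarith

lemma inv_ofReal_sq_le_inv_ofReal_sq {x r : ℝ} (h : |x| ≤ r) :
    (ENNReal.ofReal (r ^ 2))⁻¹ ≤ (ENNReal.ofReal (x ^ 2))⁻¹ :=
  ENNReal.inv_le_inv.mpr (ENNReal.ofReal_le_ofReal (sq_le_sq' (abs_le.mp h).1 (abs_le.mp h).2))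

lemma two_pow_le_dyadic_average {l : ℝ} (hl : l ∈ Set.Icc (0 : ℝ) 1) (m : ℕ) :
    (2 : ℝ≥0∞) ^ m ≤ (2 ^ m : ℝ≥0∞)⁻¹ *
      ∑ j ∈ Finset.Icc (1 : ℕ) (2 ^ m), (ENNReal.ofReal ((l - j / 2 ^ m) ^ 2))⁻¹ := by
  obtain ⟨j, hj, hdist⟩ := exists_mem_Icc_abs_sub_div_le hl (Nat.two_pow_pos m)
  push_cast at hdist
  have hpow : ((2 : ℝ≥0∞) ^ m)⁻¹ * (2 ^ m * 2 ^ m) = 2 ^ m :=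
    ENNReal.inv_mul_cancel_left (by positivity) (by finiteness)
  have hnear : (2 : ℝ≥0∞) ^ m * 2 ^ m = (ENNReal.ofReal ((1 / 2 ^ m) ^ 2))⁻¹ := by
    rw [div_pow, one_pow, ENNReal.ofReal_div_of_pos (by positivity), ENNReal.ofReal_one,
      ENNReal.ofReal_pow (by positivity), ENNReal.ofReal_pow zero_le_two, ENNReal.ofReal_ofNat,
      ← pow_two, one_div, inv_inv]
  calc (2 : ℝ≥0∞) ^ m = (2 ^ m)⁻¹ * (2 ^ m * 2 ^ m) := hpow.symm
    _ ≤ (2 ^ m)⁻¹ * (ENNReal.ofReal ((l - j / 2 ^ m) ^ 2))⁻¹ := by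
      rw [hnear]
      exact mul_le_mul_right (inv_ofReal_sq_le_inv_ofReal_sq hdist) _
    _ ≤ _ := by
      gcongr
      exact Finset.single_le_sum (f := fun k : ℕ => (ENNReal.ofReal ((l - k / 2 ^ m) ^ 2))⁻¹)
        (fun _ _ => zero_le) hj

lemma lintegral_inv_sq_dist_dyadicMeasure_eq_top {a : ℕ → ℝ}
    (hdiv : ∑' n : ℕ, ENNReal.ofReal (a (n + 1)) * 2 ^ (n + 1) = ⊤) {l : ℝ}
    (hl : l ∈ Set.Icc (0 : ℝ) 1) :
    ∫⁻ t : ℝ, (ENNReal.ofReal ((l - t) ^ 2))⁻¹ ∂(dyadicMeasure a) = ⊤ := by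
  rw [lintegral_dyadicMeasure, eq_top_iff, ← hdiv]
  exact ENNReal.tsum_le_tsum fun n => mul_le_mul_right (two_pow_le_dyadic_average hl _) _

theorem dyadic_singular_continuous_general (a : ℕ → ℝ)
    (hdiv : ∑' n : ℕ, ENNReal.ofReal (a (n + 1)) * 2 ^ (n + 1) = ⊤) :
    (∀ l ∈ Set.Icc (0 : ℝ) 1,
        ∫⁻ t : ℝ, (ENNReal.ofReal ((l - t) ^ 2))⁻¹ ∂(dyadicMeasure a) = ⊤) ∧
      {l ∈ Set.Icc (0 : ℝ) 1 |
        ∫⁻ t : ℝ, (ENNReal.ofReal ((l - t) ^ 2))⁻¹ ∂(dyadicMeasure a) < ⊤} = ∅ := by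
  have hG : ∀ l ∈ Set.Icc (0 : ℝ) 1,
      ∫⁻ t : ℝ, (ENNReal.ofReal ((l - t) ^ 2))⁻¹ ∂(dyadicMeasure a) = ⊤ :=
    fun _ hl => lintegral_inv_sq_dist_dyadicMeasure_eq_top hdiv hl
  refine ⟨hG, Set.eq_empty_of_forall_notMem fun l ⟨hl, hlt⟩ => ?_⟩
  exact hlt.ne (hG l hl)

/-- if `a_n > 0` and `Σ a_n 2ⁿ = ∞`, then for every `λ ∈ [0,1]` the
function `G(λ) = ∫ (λ−λ')⁻² dν(λ')` is infinite; consequently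
`{λ ∈ [0,1] : G(λ) < ∞}` is empty. -/
theorem dyadic_singular_continuous (a : ℕ → ℝ) (ha : ∀ n : ℕ, 1 ≤ n → 0 < a n)
    (hdiv : ∑' n : ℕ, ENNReal.ofReal (a (n + 1)) * 2 ^ (n + 1) = ⊤) :
    (∀ l ∈ Set.Icc (0 : ℝ) 1,
        ∫⁻ t : ℝ, (ENNReal.ofReal ((l - t) ^ 2))⁻¹ ∂(dyadicMeasure a) = ⊤) ∧
      {l ∈ Set.Icc (0 : ℝ) 1 |
        ∫⁻ t : ℝ, (ENNReal.ofReal ((l - t) ^ 2))⁻¹ ∂(dyadicMeasure a) < ⊤} = ∅ :=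
  dyadic_singular_continuous_general a hdiv
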